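/- arXiv:1103.1286 — 2 statements merged into one kernel-verified Lean document; each statement's English description precedes it below -/
import Mathlib

section
/- Suppose demands in two cycles are D_1 < D_2 (both positive) and the loss function in each cycle, as a function of buffer stock s, is the same strictly convex strictly decreasing function L with L continuous. If the per-cycle constraints L(s_i) ≤ (1-β) D_i are both tight at buffers (s_1*, s_2*), then there exist buffers (s_1, s_2) with s_1 + s_2 < s_1* + s_2* satisfying the aggregate constraint L(s_1) + L(s_2) ≤ (1-β)(D_1 + D_2). -/
open Filter

theorem aggregate_beats_tight_per_cycle_two_periods
    (L : ℝ → ℝ) (hLpos : ∀ s, 0 < L s) (hanti : StrictAnti L)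
    (hconv : StrictConvexOn ℝ Set.univ L) (hcont : Continuous L)
    (htail : Tendsto L atTop (nhds 0))
    (D₁ D₂ β s₁' s₂' : ℝ)
    (hD1 : 0 < D₁) (hD12 : D₁ < D₂) (hβ0 : 0 < β) (hβ1 : β < 1)
    (h1 : L s₁' = (1 - β) * D₁) (h2 : L s₂' = (1 - β) * D₂) :
    ∃ s₁ s₂ : ℝ, s₁ + s₂ < s₁' + s₂' ∧ L s₁ + L s₂ ≤ (1 - β) * (D₁ + D₂) := by
  set m := (s₁' + s₂') / 2 with hm
  have hne : s₁' ≠ s₂' := by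
    intro h
    rw [h, h2] at h1
    nlinarith
  have hmid : L m < (L s₁' + L s₂') / 2 := by
    have h := hconv.2 (Set.mem_univ s₁') (Set.mem_univ s₂') hne
      (by norm_num : (0:ℝ) < 1/2) (by norm_num : (0:ℝ) < 1/2) (by norm_num)
    have e1 : (1/2 : ℝ) • s₁' + (1/2 : ℝ) • s₂' = m := by
      simp [hm, smul_eq_mul]; ring
    have e2 : (1/2 : ℝ) • L s₁' + (1/2 : ℝ) • L s₂' = (L s₁' + L s₂') / 2 := by
      simp [smul_eq_mul]; ring
    rwa [e1, e2] at h
  have hgap0 : 0 < (L s₁' + L s₂') / 2 - L m := by linarith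
  obtain ⟨δ, hδ0, hδ⟩ := Metric.continuousAt_iff.mp (hcont.continuousAt (x := m))
    ((L s₁' + L s₂') / 2 - L m) hgap0
  have hdist : dist (m - δ/2) m < δ := by
    rw [Real.dist_eq, abs_of_nonpos (by linarith)]
    linarith
  have hL : L (m - δ/2) < (L s₁' + L s₂') / 2 := by
    have h3 := hδ hdist
    rw [Real.dist_eq] at h3
    have h4 := abs_lt.mp h3
    linarith [h4.2]
  refine ⟨m - δ/2, m, by simp [hm]; linarith, ?_⟩
  have : L (m - δ/2) + L m < L s₁' + L s₂' := by linarith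
  rw [h1, h2] at this
  nlinarith
end

section
/- Let β ∈ (0,1) and let demands D_1, …, D_m > 0 be not all equal, with identical strictly convex, strictly decreasing, differentiable per-cycle loss functions L (with L → 0 at ∞ and range containing the relevant values). Then the minimum of Σ s_i subject to the aggregate constraint Σ L(s_i) ≤ (1-β) Σ D_i is strictly less than the minimum subject to the per-cycle constraints L(s_i) ≤ (1-β) D_i for all i. -/
/-!
Let `t i` solve `L (t i) = (1 - β) D i` and `c` solve `L c = (1 - β) (∑ D) / m`. Since `L` is
decreasing, every per-cycle feasible `s'` dominates `t` coordinatewise, while the constant policy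
`c` meets the aggregate constraint with equality. As the `D i`, hence the `t i`, are not all equal,
strict Jensen gives `L (mean t) < mean (L ∘ t) = L c`, so `c < mean t`, i.e. `m c < ∑ t ≤ ∑ s'`.
-/

open Finset Filter

theorem StrictConvexOn.map_average_lt {ι : Type*} [Fintype ι] {s : Set ℝ} {f : ℝ → ℝ}
    (hf : StrictConvexOn ℝ s f) {t : ι → ℝ} (hmem : ∀ i, t i ∈ s) (hne : ∃ i j, t i ≠ t j) :
    f ((∑ i, t i) / Fintype.card ι) < (∑ i, f (t i)) / Fintype.card ι := by
  obtain ⟨i, j, hij⟩ := hne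
  have hcard : (0 : ℝ) < Fintype.card ι := by
    exact_mod_cast Fintype.card_pos_iff.2 ⟨i⟩
  have hjensen := hf.map_sum_lt (t := univ) (w := fun _ => (Fintype.card ι : ℝ)⁻¹)
    (fun _ _ => inv_pos.2 hcard) (by simp [hcard.ne']) (fun k _ => hmem k)
    ⟨i, mem_univ _, j, mem_univ _, hij⟩
  simpa only [smul_eq_mul, inv_mul_eq_div, ← sum_div] using hjensen

theorem StrictAnti.card_mul_lt_sum_of_apply_eq_average {ι : Type*} [Fintype ι] {L : ℝ → ℝ}
    (hanti : StrictAnti L) (hconv : StrictConvexOn ℝ Set.univ L) {t : ι → ℝ}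
    (hne : ∃ i j, t i ≠ t j) {c : ℝ} (hc : L c = (∑ i, L (t i)) / Fintype.card ι) :
    Fintype.card ι * c < ∑ i, t i := by
  have hcard : (0 : ℝ) < Fintype.card ι := by
    obtain ⟨i, -⟩ := hne
    exact_mod_cast Fintype.card_pos_iff.2 ⟨i⟩
  have hlt : L ((∑ i, t i) / Fintype.card ι) < L c :=
    hc ▸ hconv.map_average_lt (fun _ => Set.mem_univ _) hne
  rw [← lt_div_iff₀' hcard]
  exact hanti.lt_iff_gt.1 hlt

theorem aggregate_constraint_strictly_cheaper_general
    (m : ℕ) (D : Fin m → ℝ) (β : ℝ)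
    (hβ1 : β < 1)
    (hne : ∃ i j : Fin m, D i ≠ D j)
    (L : ℝ → ℝ) (hanti : StrictAnti L)
    (hconv : StrictConvexOn ℝ Set.univ L)
    (hrange : ∀ i, (1 - β) * D i ∈ Set.range L)
    (hrange' : (1 - β) * (∑ i, D i) / m ∈ Set.range L) :
    ∃ s : Fin m → ℝ, (∑ i, L (s i)) ≤ (1 - β) * ∑ i, D i ∧
      ∀ s' : Fin m → ℝ, (∀ i, L (s' i) ≤ (1 - β) * D i) →
        ∑ i, s i < ∑ i, s' i := by
  obtain ⟨i, j, hij⟩ := hne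
  obtain ⟨c, hc⟩ := hrange'
  choose t ht using hrange
  have hm0 : (m : ℝ) ≠ 0 := by exact_mod_cast i.pos.ne'
  refine ⟨fun _ => c, by simp [hc, hm0, mul_div_cancel₀], fun s' hs' => ?_⟩
  have ht_le : ∀ k, t k ≤ s' k := fun k => hanti.le_iff_ge.1 ((ht k).symm ▸ hs' k)
  have ht_ne : t i ≠ t j := fun h => hij <|
    mul_left_cancel₀ (sub_ne_zero.2 hβ1.ne') <| by rw [← ht i, ← ht j, h]
  have hc_avg : L c = (∑ k, L (t k)) / Fintype.card (Fin m) := by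
    simp only [ht, ← mul_sum, hc, Fintype.card_fin]
  calc ∑ _ : Fin m, c = Fintype.card (Fin m) * c := by simp
    _ < ∑ k, t k := hanti.card_mul_lt_sum_of_apply_eq_average hconv ⟨i, j, ht_ne⟩ hc_avg
    _ ≤ ∑ k, s' k := sum_le_sum fun k _ => ht_le k

theorem aggregate_constraint_strictly_cheaper
    (m : ℕ) (hm : 1 ≤ m) (D : Fin m → ℝ) (β : ℝ)
    (hβ0 : 0 < β) (hβ1 : β < 1) (hD : ∀ i, 0 < D i)
    (hne : ∃ i j : Fin m, D i ≠ D j)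
    (L : ℝ → ℝ) (hLpos : ∀ s, 0 < L s) (hanti : StrictAnti L)
    (hconv : StrictConvexOn ℝ Set.univ L) (hdiff : Differentiable ℝ L)
    (htail : Tendsto L atTop (nhds 0))
    (hrange : ∀ i, (1 - β) * D i ∈ Set.range L)
    (hrange' : (1 - β) * (∑ i, D i) / m ∈ Set.range L) :
    ∃ s : Fin m → ℝ, (∑ i, L (s i)) ≤ (1 - β) * ∑ i, D i ∧
      ∀ s' : Fin m → ℝ, (∀ i, L (s' i) ≤ (1 - β) * D i) →
        ∑ i, s i < ∑ i, s' i :=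
  aggregate_constraint_strictly_cheaper_general m D β hβ1 hne L hanti hconv hrange hrange'
end
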